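/- arXiv:1605.07827 — 4 statements merged into one kernel-verified Lean document; each statement's English description precedes it below -/
import Mathlib

section
/- Let q be a prime power and 𝔽_{q²} the field with q² elements. The number of points (x, y) ∈ 𝔽_{q²}² satisfying x^{q+1} = y^q + y is exactly q³. -/
open Polynomial

/-- Root-counting bound: a nonzero polynomial of natDegree d over a field has at most d roots. -/
lemma root_count_le {F : Type*} [Field F] [Fintype F] (f : F[X]) (hf : f ≠ 0) :
    Nat.card {y : F // f.eval y = 0} ≤ f.natDegree := by
  classical
  have hsub : {y : F | f.eval y = 0} ⊆ (f.roots.toFinset : Set F) := by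
    intro y hy
    simp only [Finset.coe_sort_coe, Finset.mem_coe, Multiset.mem_toFinset, mem_roots hf]
    exact hy
  calc Nat.card {y : F // f.eval y = 0}
      = Set.ncard {y : F | f.eval y = 0} := Nat.card_coe_set_eq _
    _ ≤ Set.ncard ((f.roots.toFinset : Finset F) : Set F) :=
        Set.ncard_le_ncard hsub (Finset.finite_toSet _)
    _ = f.roots.toFinset.card := Set.ncard_coe_finset _
    _ ≤ Multiset.card f.roots := Multiset.toFinset_card_le _
    _ ≤ f.natDegree := Polynomial.card_roots' f

/-- The Hermitian curve x^{q+1} = y^q + y has exactly q³ points over 𝔽_{q²}. -/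
theorem stmt4 (q : ℕ) (hq : IsPrimePow q)
    (F : Type*) [Field F] [Fintype F] (hF : Fintype.card F = q ^ 2) :
    Nat.card {p : F × F // p.1 ^ (q + 1) = p.2 ^ q + p.2} = q ^ 3 := by
  classical
  obtain ⟨p, k, hp, hk, rfl⟩ := hq
  have hp' : p.Prime := hp.nat_prime
  haveI : Fact p.Prime := ⟨hp'⟩
  set q : ℕ := p ^ k with hqdef
  have hq1 : 1 < q := Nat.one_lt_pow hk.ne' hp'.one_lt
  have hq0 : q ≠ 0 := by omega
  -- characteristic of F is p
  have hchar : CharP F p := by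
    set r := ringChar F with hr
    haveI : CharP F r := ringChar.charP F
    obtain ⟨n, hrp, hcard⟩ := FiniteField.card F r
    have hdvd : r ∣ p := by
      have : r ∣ q ^ 2 := by
        rw [hF] at hcard
        exact hcard ▸ dvd_pow_self r n.pos.ne'
      have : r ∣ p ^ (k * 2) := by rwa [hqdef, ← pow_mul] at this
      exact hrp.dvd_of_dvd_pow this
    have : r = p := ((Nat.prime_dvd_prime_iff_eq hrp hp').mp hdvd)
    rwa [← this]
  haveI : CharP F p := hchar
  haveI : ExpChar F p := ExpChar.prime hp'
  -- the additive map T y = y^q + y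
  let T : F →+ F :=
    { toFun := fun y => y ^ q + y
      map_zero' := by simp [hq0]
      map_add' := fun a b => by
        show (a + b) ^ q + (a + b) = (a ^ q + a) + (b ^ q + b)
        have : (a + b) ^ q = a ^ q + b ^ q := by
          rw [hqdef]; exact add_pow_char_pow a b p k
        rw [this]; ring }
  have hTdef : ∀ y : F, T y = y ^ q + y := fun y => rfl
  have hcardF : Nat.card F = q ^ 2 := by rw [Nat.card_eq_fintype_card, hF]
  -- kernel bound
  have hker_le : Nat.card T.ker ≤ q := by
    have hfne : (X ^ q + X : F[X]) ≠ 0 := by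
      intro h
      have := congrArg (fun f => Polynomial.coeff f q) h
      simp [Polynomial.coeff_X, hq1.ne, Int.subNatNat] at this
    have hdeg : (X ^ q + X : F[X]).natDegree = q := by
      compute_degree <;> simp [hq1.ne, Int.subNatNat] <;> omega
    have := root_count_le (X ^ q + X : F[X]) hfne
    rw [hdeg] at this
    refine le_trans (le_of_eq (Nat.card_congr ?_)) this
    exact Equiv.subtypeEquivRight fun y => by
      simp [AddMonoidHom.mem_ker, hTdef]
  -- range bound : range T ⊆ fixed points of x ↦ x^q
  have hrange_sub : ∀ c ∈ Set.range T, c ^ q = c := by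
    rintro c ⟨y, rfl⟩
    have hyq : y ^ (q * q) = y := by
      have := FiniteField.pow_card y
      rwa [hF, sq] at this
    rw [hTdef]
    have : (y ^ q + y) ^ q = (y ^ q) ^ q + y ^ q := by
      rw [hqdef]; exact add_pow_char_pow _ _ p k
    rw [this, ← pow_mul, hyq, add_comm]
  have hfix_le : Nat.card {c : F // c ^ q = c} ≤ q := by
    have hfne : (X ^ q - X : F[X]) ≠ 0 := by
      intro h
      have := congrArg (fun f => Polynomial.coeff f q) h
      simp [Polynomial.coeff_X, hq1.ne, Int.subNatNat] at this
    have hdeg : (X ^ q - X : F[X]).natDegree = q := by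
      compute_degree <;> simp [hq1.ne, Int.subNatNat] <;> omega
    have := root_count_le (X ^ q - X : F[X]) hfne
    rw [hdeg] at this
    refine le_trans (le_of_eq (Nat.card_congr ?_)) this
    exact Equiv.subtypeEquivRight fun c => by simp [sub_eq_zero]
  have hrange_le : Nat.card T.range ≤ q := by
    refine le_trans ?_ hfix_le
    have : Function.Injective
        (fun c : T.range => (⟨(c : F), hrange_sub c c.2⟩ : {c : F // c ^ q = c})) := by
      intro a b hab
      have h2 := Subtype.ext_iff.mp hab
      exact Subtype.ext h2
    exact Nat.card_le_card_of_injective _ this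
  -- first isomorphism theorem
  have hiso : Nat.card T.range * Nat.card T.ker = q ^ 2 := by
    have h1 : Nat.card F = Nat.card (F ⧸ T.ker) * Nat.card T.ker :=
      AddSubgroup.card_eq_card_quotient_mul_card_addSubgroup T.ker
    have h2 : Nat.card (F ⧸ T.ker) = Nat.card T.range :=
      Nat.card_congr (QuotientAddGroup.quotientKerEquivRange T).toEquiv
    rw [← h2, ← h1, hcardF]
  have hkq : Nat.card T.ker = q ∧ Nat.card T.range = q := by
    constructor <;> nlinarith [hker_le, hrange_le, hiso]
  -- range T = fixed points
  have hfix_eq : ∀ c : F, c ^ q = c → c ∈ Set.range T := by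
    intro c hc
    by_contra hcT
    -- then card fix ≥ card range + 1 > q : contradiction
    have hinj : Function.Injective
        (fun c : T.range => (⟨(c : F), hrange_sub c c.2⟩ : {c : F // c ^ q = c})) := by
      intro a b hab
      have h2 := Subtype.ext_iff.mp hab
      exact Subtype.ext h2
    have hne : ∀ a : T.range,
        (⟨(a : F), hrange_sub a a.2⟩ : {c : F // c ^ q = c}) ≠ ⟨c, hc⟩ := by
      intro a h
      apply hcT
      have : (a : F) = c := Subtype.ext_iff.mp h
      exact this ▸ a.2
    have : Nat.card T.range < Nat.card {c : F // c ^ q = c} := by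
      haveI : Fintype {c : F // c ^ q = c} := Subtype.fintype _
      haveI : Fintype T.range := Fintype.ofFinite _
      rw [Nat.card_eq_fintype_card, Nat.card_eq_fintype_card]
      refine Fintype.card_lt_of_injective_of_notMem _ hinj (b := ⟨c, hc⟩) ?_
      rintro ⟨a, ha⟩
      exact hne a ha
    omega
  -- each fiber has exactly q elements
  have hfiber : ∀ x : F, Nat.card {y : F // x ^ (q + 1) = y ^ q + y} = q := by
    intro x
    have hx : x ^ (q + 1) ∈ Set.range T := by
      apply hfix_eq
      have hxq : x ^ (q * q) = x := by
        have := FiniteField.pow_card x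
        rwa [hF, sq] at this
      calc (x ^ (q + 1)) ^ q = x ^ (q * q) * x ^ q := by ring
        _ = x * x ^ q := by rw [hxq]
        _ = x ^ (q + 1) := by ring
    obtain ⟨y₀, hy₀⟩ := hx
    have he : {y : F // x ^ (q + 1) = y ^ q + y} ≃ T.ker :=
      { toFun := fun y => ⟨y.1 - y₀, by
          rw [AddMonoidHom.mem_ker, map_sub, hy₀, hTdef, ← y.2, sub_self]⟩
        invFun := fun z => ⟨z.1 + y₀, by
          have hz := z.2
          rw [AddMonoidHom.mem_ker] at hz
          have : T (z.1 + y₀) = x ^ (q + 1) := by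
            rw [map_add, hz, zero_add, hy₀]
          rw [← this, hTdef]⟩
        left_inv := fun y => by simp
        right_inv := fun z => by simp }
    rw [Nat.card_congr he, hkq.1]
  -- final count
  rw [Nat.card_eq_fintype_card,
    Fintype.card_congr (Equiv.subtypeProdEquivSigmaSubtype
      (fun (x : F) (y : F) => x ^ (q + 1) = y ^ q + y)),
    Fintype.card_sigma]
  have : ∀ x : F, Fintype.card {y : F // x ^ (q + 1) = y ^ q + y} = q := by
    intro x
    rw [← Nat.card_eq_fintype_card]
    exact hfiber x
  simp only [this, Finset.sum_const, smul_eq_mul, Finset.card_univ, hF]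
  ring
end

section
/- Let q ≥ 2 be a prime power. With w(x^r y^s) = rq + s(q+1), the set B = {x^r y^s : 0 ≤ r ≤ q, 0 ≤ s ≤ q²-q-1} ∪ {y^s : q²-q ≤ s ≤ q²-1} has the property that the w-weights of its elements are pairwise distinct. -/
lemma stmt10_aux (q r1 s1 r2 s2 : ℕ) (h1 : r1 ≤ q) (h2 : r2 ≤ q)
    (h : r1 * q + s1 * (q + 1) = r2 * q + s2 * (q + 1)) : r1 = r2 ∧ s1 = s2 := by
  have hz : ((r1 : ℤ) - r2) * q = ((q : ℤ) + 1) * ((s2 : ℤ) - s1) := by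
    have : (r1 : ℤ) * q + s1 * (q + 1) = r2 * q + s2 * (q + 1) := by exact_mod_cast h
    ring_nf
    ring_nf at this
    linarith
  have hcop : IsCoprime ((q : ℤ) + 1) (q : ℤ) := ⟨1, -1, by ring⟩
  have hdvd : ((q : ℤ) + 1) ∣ ((r1 : ℤ) - r2) * q := ⟨(s2 : ℤ) - s1, hz⟩
  have hdvd2 : ((q : ℤ) + 1) ∣ ((r1 : ℤ) - r2) := hcop.dvd_of_dvd_mul_right hdvd
  have hr : (r1 : ℤ) - r2 = 0 := by
    refine Int.eq_zero_of_abs_lt_dvd hdvd2 ?_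
    rw [abs_lt]
    omega
  have hr' : r1 = r2 := by omega
  subst hr'
  refine ⟨rfl, ?_⟩
  have : s1 * (q + 1) = s2 * (q + 1) := by omega
  exact Nat.eq_of_mul_eq_mul_right (Nat.succ_pos q) this

/-- The w-weights `w(x^r y^s) = rq + s(q+1)` of the monomials in the set
`B = {x^r y^s : 0 ≤ r ≤ q, 0 ≤ s ≤ q²-q-1} ∪ {y^s : q²-q ≤ s ≤ q²-1}` (monomials
encoded by exponent pairs) are pairwise distinct. -/
theorem stmt10 (q : ℕ) (hq : IsPrimePow q)
    (B : Set (ℕ × ℕ))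
    (hB : B = {p : ℕ × ℕ | p.1 ≤ q ∧ p.2 ≤ q ^ 2 - q - 1} ∪
              {p : ℕ × ℕ | p.1 = 0 ∧ q ^ 2 - q ≤ p.2 ∧ p.2 ≤ q ^ 2 - 1}) :
    ∀ a ∈ B, ∀ b ∈ B, a.1 * q + a.2 * (q + 1) = b.1 * q + b.2 * (q + 1) → a = b := by
  subst hB
  intro a ha b hb h
  have ha1 : a.1 ≤ q := by rcases ha with h' | h'; exacts [h'.1, h'.1 ▸ Nat.zero_le q]
  have hb1 : b.1 ≤ q := by rcases hb with h' | h'; exacts [h'.1, h'.1 ▸ Nat.zero_le q]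
  obtain ⟨h1, h2⟩ := stmt10_aux q a.1 a.2 b.1 b.2 ha1 hb1 h
  exact Prod.ext h1 h2
end

section
/- Let q ≥ 2 and Λ the numerical semigroup generated by q and q+1. Suppose m is of the form m = (q+h-3)(q+1) + t for some 1 ≤ h ≤ q-1 and 1 ≤ t ≤ q-h. Then δ(m) := m - (q-2)(q+1) is a gap of Λ, and the smallest integer m' ≥ m such that δ(m') ∈ Λ is m' = hq + (q-2)(q+1), with δ(m') = hq. -/
/-- If m = (q+h-3)(q+1) + t with 1 ≤ h ≤ q-1 and 1 ≤ t ≤ q-h, then δ(m) = m - (q-2)(q+1)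
is a gap of Λ = ⟨q, q+1⟩, and the least m' ≥ m with δ(m') ∈ Λ is m' = hq + (q-2)(q+1),
whose δ-value is hq. -/
theorem stmt15 (q : ℕ) (hq : 2 ≤ q)
    (Λ : AddSubmonoid ℕ) (hΛ : Λ = AddSubmonoid.closure {q, q + 1})
    (h t m : ℕ) (hh1 : 1 ≤ h) (hh2 : h ≤ q - 1) (ht1 : 1 ≤ t) (ht2 : t ≤ q - h)
    (hm : m = (q + h - 3) * (q + 1) + t) :
    m - (q - 2) * (q + 1) ∉ Λ ∧
    IsLeast {m' : ℕ | m ≤ m' ∧ m' - (q - 2) * (q + 1) ∈ Λ} (h * q + (q - 2) * (q + 1)) ∧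
    h * q + (q - 2) * (q + 1) - (q - 2) * (q + 1) = h * q := by
  have hhq : h < q := by omega
  -- key lemma: no element of Λ lies in [(h-1)*q + h, h*q)
  have key : ∀ n : ℕ, (h - 1) * q + h ≤ n → n < h * q → n ∉ Λ := by
    intro n hn1 hn2 hmem
    rw [hΛ, AddSubmonoid.mem_closure_pair] at hmem
    obtain ⟨a, b, hab⟩ := hmem
    simp only [smul_eq_mul] at hab
    have hn : n = (a + b) * q + b := by rw [← hab]; ring
    rcases le_or_gt h (a + b) with hle | hlt
    · have : h * q ≤ (a + b) * q := Nat.mul_le_mul_right q hle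
      omega
    · have h1 : (a + b) * q ≤ (h - 1) * q := Nat.mul_le_mul_right q (by omega)
      omega
  -- rewrite m
  have hmP : m = (q - 2) * (q + 1) + ((h - 1) * (q + 1) + t) := by
    rw [hm]
    have : q + h - 3 = (q - 2) + (h - 1) := by omega
    rw [this, add_mul]; ring
  have hdm : m - (q - 2) * (q + 1) = (h - 1) * (q + 1) + t := by omega
  have hd1 : (h - 1) * (q + 1) + t = (h - 1) * q + ((h - 1) + t) := by ring
  have hhq' : h * q = (h - 1) * q + q := by
    have h1 : h - 1 + 1 = h := by omega
    calc h * q = (h - 1 + 1) * q := by rw [h1]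
    _ = (h - 1) * q + q := by ring
  refine ⟨?_, ⟨⟨?_, ?_⟩, ?_⟩, by omega⟩
  · rw [hdm]
    exact key _ (by omega) (by omega)
  · omega
  · show h * q + (q - 2) * (q + 1) - (q - 2) * (q + 1) ∈ Λ
    have : h * q + (q - 2) * (q + 1) - (q - 2) * (q + 1) = h * q := by omega
    rw [this, hΛ, AddSubmonoid.mem_closure_pair]
    exact ⟨h, 0, by simp [smul_eq_mul]⟩
  · rintro x ⟨hx1, hx2⟩
    by_contra hcon
    push_neg at hcon
    have hxP : (q - 2) * (q + 1) ≤ x := by omega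
    exact key (x - (q - 2) * (q + 1)) (by omega) (by omega) hx2
end

section
/- Let K be a field, q ≥ 2, and let D ⊆ K² be a finite set of points on the curve x^{q+1} = y^q + y such that, for the degrevlex order with y > x, the sous-escalier N(In(I_D)) is exactly the set of monomials dividing x^{q-1} y^{μ-1} for some 1 ≤ μ ≤ q-1. Then |D| = μq and there exist F₁, F₂ ∈ I_D with leading monomials x^q and y^μ respectively, and I_D = ⟨F₁, F₂⟩. -/
/-!
The monomials `x^q` and `y^μ` are minimal generators of the initial ideal of `I_D`, so they are
the leading monomials of some `F₁, F₂ ∈ I_D`. Division by `F₁, F₂` leaves a remainder supported on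
the box of exponents `(i, j)` with `i < q`, `j < μ`, while a nonzero element of `I_D` has its
leading monomial in the initial ideal, hence outside the box. So `I_D = ⟨F₁, F₂⟩`, and evaluation
on `D` maps the polynomials supported on the box bijectively onto `K^D` (surjectivity by
interpolation), whence `|D| = μq`.
-/

open MvPolynomial

/-- Strict degrevlex order (with y > x) on exponent pairs (x-exponent, y-exponent). -/
def drlLT (a b : ℕ × ℕ) : Prop :=
  a.1 + a.2 < b.1 + b.2 ∨ (a.1 + a.2 = b.1 + b.2 ∧ b.1 < a.1)

/-- `IsLM F r s` : the leading monomial of `F` w.r.t. degrevlex with y > x is `x^r y^s`. -/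
def IsLM {K : Type*} [CommRing K] (F : MvPolynomial (Fin 2) K) (r s : ℕ) : Prop :=
  (Finsupp.single (0 : Fin 2) r + Finsupp.single (1 : Fin 2) s) ∈ F.support ∧
    ∀ g ∈ F.support, g ≠ Finsupp.single (0 : Fin 2) r + Finsupp.single (1 : Fin 2) s →
      drlLT (g 0, g 1) (r, s)

/-- The initial ideal of `I` w.r.t. degrevlex with y > x. -/
noncomputable def initialIdeal {K : Type*} [Field K] (I : Ideal (MvPolynomial (Fin 2) K)) :
    Ideal (MvPolynomial (Fin 2) K) :=
  Ideal.span {m | ∃ F ∈ I, ∃ r s : ℕ, IsLM F r s ∧ m = X 0 ^ r * X 1 ^ s}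

/-- The vanishing ideal of a finite point set `D ⊆ K²`. -/
noncomputable def vanIdeal {K : Type*} [Field K] (D : Finset (K × K)) : Ideal (MvPolynomial (Fin 2) K) :=
  ⨅ p ∈ D, RingHom.ker (eval ![p.1, p.2] : MvPolynomial (Fin 2) K →+* K)

open scoped MonomialOrder

namespace MonomialOrder

variable {σ R : Type*} [CommRing R] (m : MonomialOrder σ)

theorem exists_sub_mem_span_of_isUnit {B : Set (MvPolynomial σ R)}
    (hB : ∀ b ∈ B, IsUnit (m.leadingCoeff b)) (f : MvPolynomial σ R) :
    ∃ r : MvPolynomial σ R, f - r ∈ Ideal.span B ∧ ∀ c ∈ r.support, ∀ b ∈ B, ¬ m.degree b ≤ c := by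
  obtain ⟨g, r, hfr, -, hr⟩ := m.div_set hB f
  refine ⟨r, ?_, hr⟩
  rw [hfr, add_sub_cancel_right]
  exact (Finsupp.mem_span_iff_linearCombination _ _ _).2 ⟨g, rfl⟩

end MonomialOrder

namespace MvPolynomial

variable {σ ι K : Type*} [Field K]

theorem exists_eval_eq_one_of_forall_ne (x : σ → K) (v : ι → σ → K) (s : Finset ι)
    (hx : ∀ i ∈ s, v i ≠ x) :
    ∃ G : MvPolynomial σ K, eval x G = 1 ∧ ∀ i ∈ s, eval (v i) G = 0 := by
  classical
  induction s using Finset.induction_on with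
  | empty => exact ⟨1, by simp, by simp⟩
  | insert j s hj ih =>
    obtain ⟨G, hGx, hGs⟩ := ih fun i hi => hx i (Finset.mem_insert_of_mem hi)
    obtain ⟨k, hk⟩ := Function.ne_iff.1 (hx j (Finset.mem_insert_self j s)).symm
    refine ⟨G * C (x k - v j k)⁻¹ * (X k - C (v j k)), ?_, ?_⟩
    · simp [hGx, sub_ne_zero.2 hk]
    · rintro i hi
      rcases Finset.mem_insert.1 hi with rfl | hi
      · simp
      · simp [hGs i hi]

theorem exists_eval_eq_of_injective {v : ι → σ → K} (hv : Function.Injective v)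
    (s : Finset ι) (t : ι → K) :
    ∃ F : MvPolynomial σ K, ∀ i ∈ s, eval (v i) F = t i := by
  classical
  choose G hG1 hG0 using fun i => exists_eval_eq_one_of_forall_ne (v i) v (s.erase i)
    fun j hj => hv.ne (Finset.ne_of_mem_erase hj)
  refine ⟨∑ i ∈ s, C (t i) * G i, fun i hi => ?_⟩
  rw [map_sum, Finset.sum_eq_single_of_mem i hi]
  · simp [hG1]
  · intro j hj hji
    simp [hG0 j i (Finset.mem_erase.2 ⟨hji.symm, hi⟩)]

theorem finrank_restrictSupport (s : Finset (σ →₀ ℕ)) :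
    Module.finrank K (restrictSupport K (s : Set (σ →₀ ℕ))) = s.card := by
  rw [Module.finrank_eq_card_basis (basisRestrictSupport K _)]
  simp only [SetLike.coe_sort_coe, Fintype.card_coe]

end MvPolynomial

theorem Submodule.eq_of_le_of_forall_exists_sub_mem {R M : Type*} [Ring R] [AddCommGroup M]
    [Module R M] {I J : Submodule R M} {V : Set M} (hJI : J ≤ I)
    (hrem : ∀ f, ∃ r ∈ V, f - r ∈ J) (hzero : ∀ r ∈ V, r ∈ I → r = 0) : I = J := by
  refine le_antisymm (fun f hf => ?_) hJI
  obtain ⟨r, hr, hfr⟩ := hrem f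
  rwa [hzero r hr (by simpa using I.sub_mem hf (hJI hfr)), sub_zero] at hfr

namespace Staircase

open Finsupp

-- Degrevlex with `y > x` in two variables is deglex after swapping the two variables.
noncomputable def drl : MonomialOrder (Fin 2) where
  syn := DegLex (Fin 2 →₀ ℕ)
  toSyn := (Finsupp.domCongr Fin.revPerm).trans MonomialOrder.degLex.toSyn
  toSyn_monotone _ _ h := MonomialOrder.degLex.toSyn_monotone fun i => h (Fin.rev i)

theorem drl_lt_iff {a b : Fin 2 →₀ ℕ} : a ≺[drl] b ↔ drlLT (a 0, a 1) (b 0, b 1) := by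
  have : a ≺[drl] b ↔
      Finsupp.domCongr Fin.revPerm a ≺[MonomialOrder.degLex] Finsupp.domCongr Fin.revPerm b :=
    Iff.rfl
  rw [this, MonomialOrder.degLex_lt_iff, DegLex.lt_iff]
  simp only [ofDegLex_toDegLex, degree_eq_sum, Fin.sum_univ_two, Lex.lt_iff, ofLex_toLex,
    Fin.exists_fin_two, domCongr_apply, equivMapDomain_apply]
  simp [drlLT]
  omega

theorem single_zero_add_single_one (d : Fin 2 →₀ ℕ) : single 0 (d 0) + single 1 (d 1) = d := by
  ext i
  fin_cases i <;> simp

theorem X_zero_pow_mul_X_one_pow {R : Type*} [CommSemiring R] (u v : ℕ) :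
    (X 0 ^ u * X 1 ^ v : MvPolynomial (Fin 2) R) = monomial (single 0 u + single 1 v) 1 := by
  rw [X_pow_eq_monomial, X_pow_eq_monomial, monomial_mul, one_mul]

noncomputable def box {σ : Type*} [Fintype σ] [DecidableEq σ] (b : σ → ℕ) : Finset (σ →₀ ℕ) :=
  (Fintype.piFinset fun i => Finset.range (b i)).map equivFunOnFinite.symm.toEmbedding

section Box

variable {σ : Type*} [Fintype σ] [DecidableEq σ] {b : σ → ℕ}

theorem mem_box {d : σ →₀ ℕ} : d ∈ box b ↔ ∀ i, d i < b i := by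
  simp [box, Finset.mem_map_equiv]

theorem card_box (b : σ → ℕ) : (box b).card = ∏ i, b i := by
  simp [box]

theorem eq_single_of_le_of_notMem_box {i : σ} (hb : ∀ j ≠ i, 0 < b j) {e : σ →₀ ℕ}
    (hle : e ≤ single i (b i)) (he : e ∉ box b) : e = single i (b i) := by
  obtain ⟨j, hj⟩ : ∃ j, b j ≤ e j := by simpa [mem_box] using he
  obtain rfl : j = i := by
    by_contra hji
    have := hle j
    rw [single_eq_of_ne hji] at this
    have := hb j hji
    omega
  ext k
  by_cases hk : k = j
  · subst hk
    exact le_antisymm (by simpa using hle k) (by simpa using hj)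
  · simpa [single_eq_of_ne hk] using hle k

end Box

variable {K : Type*} [Field K] {I : Ideal (MvPolynomial (Fin 2) K)}

theorem isLM_iff {F : MvPolynomial (Fin 2) K} {r s : ℕ} :
    IsLM F r s ↔ F ≠ 0 ∧ drl.degree F = single 0 r + single 1 s := by
  obtain ⟨d, rfl, rfl, hd⟩ : ∃ d : Fin 2 →₀ ℕ, d 0 = r ∧ d 1 = s ∧ single 0 r + single 1 s = d :=
    ⟨_, by simp, by simp, rfl⟩
  simp only [IsLM, hd, ← drl_lt_iff]
  constructor
  · rintro ⟨hmem, hlt⟩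
    have hF : F ≠ 0 := by rintro rfl; simp at hmem
    refine ⟨hF, by_contra fun hne => ?_⟩
    exact (hlt _ (drl.degree_mem_support hF) hne).not_ge (drl.le_degree hmem)
  · rintro ⟨hF, rfl⟩
    exact ⟨drl.degree_mem_support hF, fun c hc hne =>
      (drl.le_degree hc).lt_of_ne (drl.toSyn.injective.ne hne)⟩

theorem initialIdeal_eq_span_monomial :
    initialIdeal I = Ideal.span
      ((monomial · 1) '' {d | ∃ F ∈ I, F ≠ 0 ∧ drl.degree F = d}) := by
  rw [initialIdeal]
  congr 1
  ext p
  simp only [Set.mem_ofPred_eq, Set.mem_image, isLM_iff, X_zero_pow_mul_X_one_pow]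
  constructor
  · rintro ⟨F, hF, r, s, ⟨hF0, hdeg⟩, rfl⟩
    exact ⟨_, ⟨F, hF, hF0, hdeg⟩, rfl⟩
  · rintro ⟨d, ⟨F, hF, hF0, rfl⟩, rfl⟩
    refine ⟨F, hF, _, _, ⟨hF0, (single_zero_add_single_one _).symm⟩, ?_⟩
    rw [single_zero_add_single_one]

theorem monomial_mem_initialIdeal_iff {d : Fin 2 →₀ ℕ} :
    monomial d 1 ∈ initialIdeal I ↔ ∃ F ∈ I, F ≠ 0 ∧ drl.degree F ≤ d := by
  rw [initialIdeal_eq_span_monomial, mem_ideal_span_monomial_image]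
  simp [and_assoc]

theorem monomial_degree_mem_initialIdeal {F : MvPolynomial (Fin 2) K} (hF : F ∈ I)
    (hF0 : F ≠ 0) : monomial (drl.degree F) 1 ∈ initialIdeal I :=
  monomial_mem_initialIdeal_iff.2 ⟨F, hF, hF0, le_rfl⟩

theorem exists_degree_eq_of_minimal {d : Fin 2 →₀ ℕ} (hd : monomial d 1 ∈ initialIdeal I)
    (hmin : ∀ e ≤ d, monomial e 1 ∈ initialIdeal I → e = d) :
    ∃ F ∈ I, F ≠ 0 ∧ drl.degree F = d := by
  obtain ⟨F, hF, hF0, hle⟩ := monomial_mem_initialIdeal_iff.1 hd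
  exact ⟨F, hF, hF0, hmin _ hle (monomial_degree_mem_initialIdeal hF hF0)⟩

theorem eq_zero_of_support_notMem_initialIdeal {F : MvPolynomial (Fin 2) K} (hF : F ∈ I)
    (hsupp : ∀ c ∈ F.support, monomial c 1 ∉ initialIdeal I) : F = 0 := by
  by_contra hF0
  exact hsupp _ (drl.degree_mem_support hF0) (monomial_degree_mem_initialIdeal hF hF0)

theorem exists_degree_eq_single {b : Fin 2 → ℕ}
    (hstd : ∀ d, monomial d 1 ∉ initialIdeal I ↔ d ∈ box b) (i : Fin 2) (hb : ∀ j ≠ i, 0 < b j) :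
    ∃ F ∈ I, F ≠ 0 ∧ drl.degree F = single i (b i) := by
  refine exists_degree_eq_of_minimal (not_not.1 fun h => ?_) fun e hle he =>
    eq_single_of_le_of_notMem_box hb hle (mt (hstd e).2 (not_not.2 he))
  simpa using mem_box.1 ((hstd _).1 h) i

theorem exists_sub_mem_span_of_degree_eq {b : Fin 2 → ℕ} {F₁ F₂ : MvPolynomial (Fin 2) K}
    (hF₁ : F₁ ≠ 0) (hdeg₁ : drl.degree F₁ = single 0 (b 0))
    (hF₂ : F₂ ≠ 0) (hdeg₂ : drl.degree F₂ = single 1 (b 1)) (f : MvPolynomial (Fin 2) K) :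
    ∃ r ∈ restrictSupport K (box b : Set (Fin 2 →₀ ℕ)), f - r ∈ Ideal.span {F₁, F₂} := by
  obtain ⟨r, hfr, hr⟩ := drl.exists_sub_mem_span_of_isUnit (B := {F₁, F₂})
    (by simp [hF₁, hF₂]) f
  refine ⟨r, fun c hc => mem_box.2 ?_, hfr⟩
  simpa [hdeg₁, hdeg₂, single_le_iff, Fin.forall_fin_two] using hr c hc

theorem mem_vanIdeal {D : Finset (K × K)} {F : MvPolynomial (Fin 2) K} :
    F ∈ vanIdeal D ↔ ∀ p ∈ D, eval ![p.1, p.2] F = 0 := by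
  simp [vanIdeal, Submodule.mem_iInf, RingHom.mem_ker]

theorem card_eq_finrank_restrictSupport {D : Finset (K × K)} {S : Set (Fin 2 →₀ ℕ)}
    (hrem : ∀ f, ∃ r ∈ restrictSupport K S, f - r ∈ vanIdeal D)
    (hzero : ∀ r ∈ restrictSupport K S, r ∈ vanIdeal D → r = 0) :
    D.card = Module.finrank K (restrictSupport K S) := by
  let pt : D → Fin 2 → K := fun p => ![p.1.1, p.1.2]
  have hpt : Function.Injective pt := fun p p' h =>
    Subtype.ext (Prod.ext (congrFun h 0) (congrFun h 1))
  let E : restrictSupport K S →ₗ[K] (D → K) :=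
    LinearMap.pi fun p => (aeval (pt p)).toLinearMap ∘ₗ (restrictSupport K S).subtype
  have hE : ∀ r p, E r p = eval (pt p) (r : MvPolynomial (Fin 2) K) := fun r p => by
    simp [E]
  have hinj : Function.Injective E := by
    refine (injective_iff_map_eq_zero E).2 fun r hr => Subtype.ext (hzero r r.2 ?_)
    exact mem_vanIdeal.2 fun p hp => by simpa [hE] using congrFun hr ⟨p, hp⟩
  have hsurj : Function.Surjective E := by
    intro t
    obtain ⟨F, hF⟩ := exists_eval_eq_of_injective hpt Finset.univ t
    obtain ⟨r, hr, hFr⟩ := hrem F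
    refine ⟨⟨r, hr⟩, funext fun p => ?_⟩
    have hp := mem_vanIdeal.1 hFr p p.2
    rw [map_sub, sub_eq_zero] at hp
    rw [hE, ← hF p (Finset.mem_univ p)]
    exact hp.symm
  rw [← Fintype.card_coe D, ← Module.finrank_fintype_fun_eq_card (R := K),
    (LinearEquiv.ofBijective E ⟨hinj, hsurj⟩).finrank_eq]

end Staircase

open Staircase Finsupp in
theorem stmt18_general (K : Type*) [Field K] (q : ℕ) (hq : 2 ≤ q)
    (D : Finset (K × K))
    (μ : ℕ) (hμ1 : 1 ≤ μ)
    (hstair : ∀ u v : ℕ,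
      ((X 0 ^ u * X 1 ^ v : MvPolynomial (Fin 2) K) ∉ initialIdeal (vanIdeal D)) ↔
        (u ≤ q - 1 ∧ v ≤ μ - 1)) :
    D.card = μ * q ∧
    ∃ F₁ F₂ : MvPolynomial (Fin 2) K, F₁ ∈ vanIdeal D ∧ F₂ ∈ vanIdeal D ∧
      IsLM F₁ q 0 ∧ IsLM F₂ 0 μ ∧ vanIdeal D = Ideal.span {F₁, F₂} := by
  have hstd : ∀ d, monomial d 1 ∉ initialIdeal (vanIdeal D) ↔ d ∈ box ![q, μ] := fun d => by
    rw [← single_zero_add_single_one d, ← X_zero_pow_mul_X_one_pow, hstair,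
      single_zero_add_single_one, mem_box, Fin.forall_fin_two]
    simp only [Matrix.cons_val_zero, Matrix.cons_val_one]
    omega
  obtain ⟨F₁, hF₁, hF₁0, hdeg₁⟩ :=
    exists_degree_eq_single hstd 0 (by simp [Fin.forall_fin_two]; omega)
  obtain ⟨F₂, hF₂, hF₂0, hdeg₂⟩ :=
    exists_degree_eq_single hstd 1 (by simp [Fin.forall_fin_two]; omega)
  have hspan_le : Ideal.span {F₁, F₂} ≤ vanIdeal D := by
    simp [Ideal.span_le, Set.insert_subset_iff, hF₁, hF₂]
  have hrem := exists_sub_mem_span_of_degree_eq hF₁0 hdeg₁ hF₂0 hdeg₂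
  have hzero : ∀ r ∈ restrictSupport K (box ![q, μ] : Set _), r ∈ vanIdeal D → r = 0 :=
    fun r hr hrI => eq_zero_of_support_notMem_initialIdeal hrI fun c hc => (hstd c).2 (hr hc)
  refine ⟨?_, F₁, F₂, hF₁, hF₂, isLM_iff.2 ⟨hF₁0, by simpa using hdeg₁⟩,
    isLM_iff.2 ⟨hF₂0, by simpa using hdeg₂⟩,
    Submodule.eq_of_le_of_forall_exists_sub_mem hspan_le hrem hzero⟩
  rw [card_eq_finrank_restrictSupport (fun f => (hrem f).imp fun r => And.imp_right (hspan_le ·))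
    hzero, finrank_restrictSupport, card_box, Fin.prod_univ_two]
  simp [mul_comm]

/-- If `D` lies on the Hermitian curve and the sous-escalier of the initial ideal of its
vanishing ideal is exactly the set of divisors of `x^{q-1} y^{μ-1}` (1 ≤ μ ≤ q-1), then
`|D| = μq` and `I_D = ⟨F₁, F₂⟩` for polynomials with leading monomials `x^q` and `y^μ`. -/
theorem stmt18 (K : Type*) [Field K] (q : ℕ) (hq : 2 ≤ q)
    (D : Finset (K × K)) (hD : ∀ p ∈ D, p.1 ^ (q + 1) = p.2 ^ q + p.2)
    (μ : ℕ) (hμ1 : 1 ≤ μ) (hμ2 : μ ≤ q - 1)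
    (hstair : ∀ u v : ℕ,
      ((X 0 ^ u * X 1 ^ v : MvPolynomial (Fin 2) K) ∉ initialIdeal (vanIdeal D)) ↔
        (u ≤ q - 1 ∧ v ≤ μ - 1)) :
    D.card = μ * q ∧
    ∃ F₁ F₂ : MvPolynomial (Fin 2) K, F₁ ∈ vanIdeal D ∧ F₂ ∈ vanIdeal D ∧
      IsLM F₁ q 0 ∧ IsLM F₂ 0 μ ∧ vanIdeal D = Ideal.span {F₁, F₂} :=
  stmt18_general K q hq D μ hμ1 hstair
end
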